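/- arXiv:2605.16604 — 4 statements merged into one kernel-verified Lean document; each statement's English description precedes it below -/
import Mathlib

section
/- Let Y be a {0,1}-valued random variable with P(Y = 1) = q for some q ∈ [0,1], let ℓ be the cost-sensitive routing loss with constants c_SLM < c_LLM and κ > 0 satisfying 0 ≤ c_LLM − c_SLM ≤ κ, and set τ = (c_LLM − c_SLM)/κ. For any q̂ ∈ [0,1], let d̂ = 1[q̂ ≥ τ] and d* = 1[q ≥ τ]. Then E[ℓ(d̂, Y)] − E[ℓ(d*, Y)] ≤ κ·|q̂ − q|. -/
/-! The expected loss is affine in the label, so it equals the loss at `q`, and switching from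
decision `0` to decision `1` changes it by `κ (τ - q)`. The two threshold rules disagree only when
`τ` lies between `q` and `q̂`, and then this change has absolute value at most `κ |q̂ - q|`. -/

open MeasureTheory

/-- The cost-sensitive routing loss of a decision `d ∈ {0,1}` on a label `y ∈ {0,1}`:
`ℓ(d, y) = c_SLM (1 − d) + c_LLM d + κ y (1 − d)`. -/
def routeLoss (cSLM cLLM κ : ℝ) (d y : ℝ) : ℝ :=
  cSLM * (1 - d) + cLLM * d + κ * y * (1 - d)

section ZeroOneValued

variable {Ω : Type*} [MeasurableSpace Ω] {μ : Measure Ω} {Y : Ω → ℝ}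

lemma eq_indicator_one_of_forall_eq_zero_or_one {α M : Type*} [Zero M] [One M] {f : α → M}
    (hf : ∀ x, f x = 0 ∨ f x = 1) : f = {x | f x = 1}.indicator 1 := by
  funext x
  rcases hf x with h | h <;> simp [Set.indicator, h]

lemma integrable_of_forall_eq_zero_or_one [IsFiniteMeasure μ] (hY : Measurable Y)
    (hY01 : ∀ ω, Y ω = 0 ∨ Y ω = 1) : Integrable Y μ := by
  rw [eq_indicator_one_of_forall_eq_zero_or_one hY01]
  exact (integrable_const 1).indicator (hY (measurableSet_singleton 1))

lemma integral_eq_measureReal_of_forall_eq_zero_or_one (hY : Measurable Y)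
    (hY01 : ∀ ω, Y ω = 0 ∨ Y ω = 1) : ∫ ω, Y ω ∂μ = μ.real {ω | Y ω = 1} := by
  conv_lhs => rw [eq_indicator_one_of_forall_eq_zero_or_one hY01]
  exact integral_indicator_one (hY (measurableSet_singleton 1))

end ZeroOneValued

section RouteLoss

variable {cSLM cLLM κ : ℝ}

lemma integral_routeLoss {Ω : Type*} [MeasurableSpace Ω] {μ : Measure Ω}
    [IsProbabilityMeasure μ] {Y : Ω → ℝ} (hY : Integrable Y μ) (d : ℝ) :
    ∫ ω, routeLoss cSLM cLLM κ d (Y ω) ∂μ = routeLoss cSLM cLLM κ d (∫ ω, Y ω ∂μ) := by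
  have h_affine : (fun ω => routeLoss cSLM cLLM κ d (Y ω))
      = fun ω => routeLoss cSLM cLLM κ d 0 + κ * (1 - d) * Y ω := by
    funext ω; simp only [routeLoss]; ring
  rw [h_affine, integral_add (integrable_const _) (hY.const_mul _), integral_const,
    integral_const_mul]
  simp only [probReal_univ, one_smul, routeLoss]
  ring

lemma routeLoss_one_sub_routeLoss_zero (hκ : κ ≠ 0) (y : ℝ) :
    routeLoss cSLM cLLM κ 1 y - routeLoss cSLM cLLM κ 0 y = κ * ((cLLM - cSLM) / κ - y) := by
  simp only [routeLoss]
  field_simp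
  ring

lemma routeLoss_threshold_regret_le (hκ : 0 < κ) (q qhat : ℝ) :
    routeLoss cSLM cLLM κ (if (cLLM - cSLM) / κ ≤ qhat then 1 else 0) q -
      routeLoss cSLM cLLM κ (if (cLLM - cSLM) / κ ≤ q then 1 else 0) q ≤ κ * |qhat - q| := by
  have h_switch :=
    routeLoss_one_sub_routeLoss_zero (cSLM := cSLM) (cLLM := cLLM) hκ.ne' q
  have h_abs := mul_nonneg hκ.le (abs_nonneg (qhat - q))
  split_ifs with hhat h
  · simpa using h_abs
  · calc _ = κ * ((cLLM - cSLM) / κ - q) := h_switch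
      _ ≤ κ * |qhat - q| := by gcongr; linarith [le_abs_self (qhat - q)]
  · calc _ = κ * (q - (cLLM - cSLM) / κ) := by linarith
      _ ≤ κ * |qhat - q| := by gcongr; linarith [neg_abs_le (qhat - q)]
  · simpa using h_abs

end RouteLoss

theorem routeLoss_plugin_regret_scalar_general
    {Ω : Type*} [MeasurableSpace Ω] (μ : Measure Ω) [IsProbabilityMeasure μ]
    (Y : Ω → ℝ) (hY : Measurable Y) (hY01 : ∀ ω, Y ω = 0 ∨ Y ω = 1)
    (q : ℝ)
    (hq : (μ {ω | Y ω = 1}).toReal = q)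
    (cSLM cLLM κ : ℝ) (hκ : 0 < κ)
    (qhat : ℝ) :
    (∫ ω, routeLoss cSLM cLLM κ (if (cLLM - cSLM) / κ ≤ qhat then 1 else 0) (Y ω) ∂μ) -
      (∫ ω, routeLoss cSLM cLLM κ (if (cLLM - cSLM) / κ ≤ q then 1 else 0) (Y ω) ∂μ) ≤
      κ * |qhat - q| := by
  have h_mean : ∫ ω, Y ω ∂μ = q :=
    (integral_eq_measureReal_of_forall_eq_zero_or_one hY hY01).trans hq
  have h_int := integrable_of_forall_eq_zero_or_one (μ := μ) hY hY01
  rw [integral_routeLoss h_int, integral_routeLoss h_int, h_mean]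
  exact routeLoss_threshold_regret_le hκ q qhat

/-- For a `{0,1}`-valued random variable `Y` with `P(Y = 1) = q`, the
cost-sensitive routing loss with `c_SLM < c_LLM`, `κ > 0`, `0 ≤ c_LLM − c_SLM ≤ κ`, and
`τ = (c_LLM − c_SLM)/κ`: for any `q̂ ∈ [0,1]`, with `d̂ = 1[q̂ ≥ τ]` and `d* = 1[q ≥ τ]`,
`E[ℓ(d̂, Y)] − E[ℓ(d*, Y)] ≤ κ |q̂ − q|`. -/
theorem routeLoss_plugin_regret_scalar
    {Ω : Type*} [MeasurableSpace Ω] (μ : Measure Ω) [IsProbabilityMeasure μ]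
    (Y : Ω → ℝ) (hY : Measurable Y) (hY01 : ∀ ω, Y ω = 0 ∨ Y ω = 1)
    (q : ℝ) (hq0 : 0 ≤ q) (hq1 : q ≤ 1)
    (hq : (μ {ω | Y ω = 1}).toReal = q)
    (cSLM cLLM κ : ℝ) (hc : cSLM < cLLM) (hκ : 0 < κ)
    (hgap0 : 0 ≤ cLLM - cSLM) (hgapκ : cLLM - cSLM ≤ κ)
    (qhat : ℝ) (hqhat0 : 0 ≤ qhat) (hqhat1 : qhat ≤ 1) :
    (∫ ω, routeLoss cSLM cLLM κ (if (cLLM - cSLM) / κ ≤ qhat then 1 else 0) (Y ω) ∂μ) -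
      (∫ ω, routeLoss cSLM cLLM κ (if (cLLM - cSLM) / κ ≤ q then 1 else 0) (Y ω) ∂μ) ≤
      κ * |qhat - q| :=
  routeLoss_plugin_regret_scalar_general μ Y hY hY01 q hq cSLM cLLM κ hκ qhat
end

section
/- Let (Ω, ℱ, P) be a probability space, F a random variable taking values in a measurable space 𝔽, and Y a {0,1}-valued random variable. Let q* : 𝔽 → [0,1] be measurable with q*(F) = E[Y | F] almost surely, and let r : 𝔽 → [0,1] be measurable. Let ℓ be the cost-sensitive routing loss with constants c_SLM < c_LLM and κ > 0 satisfying 0 ≤ c_LLM − c_SLM ≤ κ, and set τ = (c_LLM − c_SLM)/κ. Define the plug-in router d̂ = 1[r(F) ≥ τ] and the Bayes router d* = 1[q*(F) ≥ τ]. Then E[ℓ(d̂, Y)] − E[ℓ(d*, Y)] ≤ κ·E[|r(F) − q*(F)|]; that is, the excess expected routing cost of the plug-in router is bounded by κ times the mean absolute calibration error of r. -/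
/-!
The two losses differ by `(d̂ - d*) (c_LLM - c_SLM - κ Y) = κ (d̂ - d*) (τ - Y)`. Since `d̂ - d*`
is a bounded function of `F`, `Y` may be replaced by `q*(F) = E[Y | F]` under the integral.
Pointwise, `(d̂ - d*) (τ - q*(F))` vanishes unless `τ` lies between `r(F)` and `q*(F)`, and then
it is at most `|r(F) - q*(F)|`.
-/

open MeasureTheory

theorem routeLoss_sub_routeLoss {κ : ℝ} (hκ : κ ≠ 0) (cSLM cLLM d d' y : ℝ) :
    routeLoss cSLM cLLM κ d y - routeLoss cSLM cLLM κ d' y =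
      κ * ((d - d') * ((cLLM - cSLM) / κ - y)) := by
  unfold routeLoss; field_simp; ring

theorem integrable_routeLoss {Ω : Type*} [MeasurableSpace Ω] {μ : Measure Ω}
    [IsFiniteMeasure μ] (cSLM cLLM κ : ℝ) {d Y : Ω → ℝ} (hd : AEStronglyMeasurable d μ)
    (hd_bdd : ∀ ω, ‖d ω‖ ≤ 1) (hY : Integrable Y μ) :
    Integrable (fun ω => routeLoss cSLM cLLM κ (d ω) (Y ω)) μ := by
  have hd_int : Integrable d μ := .of_bound hd 1 (ae_of_all _ hd_bdd)
  have h1d_int : Integrable (fun ω => 1 - d ω) μ := (integrable_const 1).sub hd_int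
  have h1d_bdd : ∀ ω, ‖1 - d ω‖ ≤ 2 := fun ω =>
    (norm_sub_le _ _).trans (by rw [norm_one]; linarith [hd_bdd ω])
  exact ((h1d_int.const_mul cSLM).add (hd_int.const_mul cLLM)).add
    ((hY.const_mul κ).mul_bdd h1d_int.aestronglyMeasurable (ae_of_all _ h1d_bdd))

theorem measurable_threshold {α : Type*} [MeasurableSpace α] {g : α → ℝ} (hg : Measurable g)
    (τ : ℝ) : Measurable fun x => if τ ≤ g x then (1 : ℝ) else 0 :=
  .ite (measurableSet_le measurable_const hg) measurable_const measurable_const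

theorem norm_threshold_le_one (τ a : ℝ) : ‖if τ ≤ a then (1 : ℝ) else 0‖ ≤ 1 := by
  split_ifs <;> norm_num

theorem norm_threshold_sub_threshold_le_one (τ a b : ℝ) :
    ‖(if τ ≤ a then (1 : ℝ) else 0) - (if τ ≤ b then 1 else 0)‖ ≤ 1 := by
  split_ifs <;> norm_num

theorem threshold_sub_threshold_mul_le_abs_sub (τ a b : ℝ) :
    ((if τ ≤ a then 1 else 0) - (if τ ≤ b then 1 else 0)) * (τ - b) ≤ |a - b| := by
  have := le_abs_self (a - b)
  have := neg_abs_le (a - b)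
  split_ifs <;> linarith

theorem integral_mul_condExp_of_bound {Ω : Type*} {m mΩ : MeasurableSpace Ω} {μ : Measure Ω}
    [IsFiniteMeasure μ] (hm : m ≤ mΩ) {f g : Ω → ℝ} (hf : StronglyMeasurable[m] f)
    (hg : Integrable g μ) (c : ℝ) (hf_bound : ∀ᵐ ω ∂μ, ‖f ω‖ ≤ c) :
    ∫ ω, f ω * μ[g | m] ω ∂μ = ∫ ω, f ω * g ω ∂μ :=
  calc ∫ ω, f ω * μ[g | m] ω ∂μ = ∫ ω, μ[f * g | m] ω ∂μ :=
        (integral_congr_ae (condExp_stronglyMeasurable_mul_of_bound hm hf hg c hf_bound)).symm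
    _ = ∫ ω, f ω * g ω ∂μ := integral_condExp hm

theorem integral_comp_mul_eq_of_ae_eq_condExp {Ω 𝔽 : Type*} [MeasurableSpace Ω]
    [MeasurableSpace 𝔽] {μ : Measure Ω} [IsFiniteMeasure μ] {F : Ω → 𝔽} (hF : Measurable F)
    {Y : Ω → ℝ} (hY : Integrable Y μ) {q : 𝔽 → ℝ}
    (hq : (fun ω => q (F ω)) =ᵐ[μ] μ[Y | MeasurableSpace.comap F inferInstance])
    {D : 𝔽 → ℝ} (hD : Measurable D) (c : ℝ) (hD_bdd : ∀ f, ‖D f‖ ≤ c) :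
    ∫ ω, D (F ω) * Y ω ∂μ = ∫ ω, D (F ω) * q (F ω) ∂μ := by
  rw [← integral_mul_condExp_of_bound (f := fun ω => D (F ω)) hF.comap_le
    (hD.comp (comap_measurable F)).stronglyMeasurable hY c (ae_of_all _ fun ω => hD_bdd (F ω))]
  exact integral_congr_ae (hq.mono fun ω h => by simp only [h])

theorem plugin_router_regret_le_calibration_error_general
    {Ω 𝔽 : Type*} [MeasurableSpace Ω] [MeasurableSpace 𝔽]
    (μ : Measure Ω) [IsProbabilityMeasure μ]
    (F : Ω → 𝔽) (hF : Measurable F)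
    (Y : Ω → ℝ) (hY : Measurable Y) (hY01 : ∀ ω, Y ω = 0 ∨ Y ω = 1)
    (qs : 𝔽 → ℝ) (hqs : Measurable qs)
    (hqsF : (fun ω => qs (F ω)) =ᵐ[μ] μ[Y | MeasurableSpace.comap F inferInstance])
    (r : 𝔽 → ℝ) (hr : Measurable r) (hr0 : ∀ f, 0 ≤ r f) (hr1 : ∀ f, r f ≤ 1)
    (cSLM cLLM κ : ℝ) (hκ : 0 < κ) :
    (∫ ω, routeLoss cSLM cLLM κ (if (cLLM - cSLM) / κ ≤ r (F ω) then 1 else 0) (Y ω) ∂μ) -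
      (∫ ω, routeLoss cSLM cLLM κ (if (cLLM - cSLM) / κ ≤ qs (F ω) then 1 else 0) (Y ω) ∂μ) ≤
      κ * ∫ ω, |r (F ω) - qs (F ω)| ∂μ := by
  set τ := (cLLM - cSLM) / κ
  set D : 𝔽 → ℝ := fun f => (if τ ≤ r f then 1 else 0) - (if τ ≤ qs f then 1 else 0)
  have hD : Measurable D := (measurable_threshold hr τ).sub (measurable_threshold hqs τ)
  have hD_bdd : ∀ f, ‖D f‖ ≤ 1 := fun f => norm_threshold_sub_threshold_le_one τ (r f) (qs f)
  have hY_int : Integrable Y μ := .of_bound hY.aestronglyMeasurable 1 <|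
    ae_of_all _ fun ω => by rcases hY01 ω with h | h <;> simp [h]
  have hqsF_int : Integrable (fun ω => qs (F ω)) μ := integrable_condExp.congr hqsF.symm
  have hrF_int : Integrable (fun ω => r (F ω)) μ := .of_bound (hr.comp hF).aestronglyMeasurable 1 <|
    ae_of_all _ fun ω => abs_le.2 ⟨by linarith [hr0 (F ω)], hr1 (F ω)⟩
  have hDF_mul {g : Ω → ℝ} (hg : Integrable g μ) : Integrable (fun ω => D (F ω) * g ω) μ :=
    hg.bdd_mul (hD.comp hF).aestronglyMeasurable (ae_of_all _ fun ω => hD_bdd (F ω))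
  have hloss_int {g : 𝔽 → ℝ} (hg : Measurable g) :
      Integrable (fun ω => routeLoss cSLM cLLM κ (if τ ≤ g (F ω) then 1 else 0) (Y ω)) μ :=
    integrable_routeLoss _ _ _ (measurable_threshold (hg.comp hF) τ).aestronglyMeasurable
      (fun ω => norm_threshold_le_one τ (g (F ω))) hY_int
  calc _ = κ * ∫ ω, D (F ω) * (τ - Y ω) ∂μ := by
        rw [← integral_sub (hloss_int hr) (hloss_int hqs), ← integral_const_mul]
        simp only [routeLoss_sub_routeLoss hκ.ne', D, τ]
    _ = κ * ∫ ω, D (F ω) * (τ - qs (F ω)) ∂μ := by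
        simp only [mul_sub]
        rw [integral_sub (hDF_mul (integrable_const τ)) (hDF_mul hY_int),
          integral_sub (hDF_mul (integrable_const τ)) (hDF_mul hqsF_int),
          integral_comp_mul_eq_of_ae_eq_condExp hF hY_int hqsF hD 1 hD_bdd]
    _ ≤ κ * ∫ ω, |r (F ω) - qs (F ω)| ∂μ := by
        refine mul_le_mul_of_nonneg_left (integral_mono ?_ ?_ fun ω => ?_) hκ.le
        exacts [hDF_mul ((integrable_const τ).sub hqsF_int), (hrF_int.sub hqsF_int).abs,
          threshold_sub_threshold_mul_le_abs_sub τ (r (F ω)) (qs (F ω))]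

/-- Let `F` be a random variable with values in a measurable space `𝔽`,
`Y` a `{0,1}`-valued random variable, `q* : 𝔽 → [0,1]` measurable with `q*(F) = E[Y | F]`
a.s., and `r : 𝔽 → [0,1]` measurable. For the cost-sensitive routing loss with
`c_SLM < c_LLM`, `κ > 0`, `0 ≤ c_LLM − c_SLM ≤ κ`, and threshold `τ = (c_LLM − c_SLM)/κ`,
the plug-in router `d̂ = 1[r(F) ≥ τ]` and the Bayes router `d* = 1[q*(F) ≥ τ]` satisfy
`E[ℓ(d̂, Y)] − E[ℓ(d*, Y)] ≤ κ E[|r(F) − q*(F)|]`. -/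
theorem plugin_router_regret_le_calibration_error
    {Ω 𝔽 : Type*} [MeasurableSpace Ω] [MeasurableSpace 𝔽]
    (μ : Measure Ω) [IsProbabilityMeasure μ]
    (F : Ω → 𝔽) (hF : Measurable F)
    (Y : Ω → ℝ) (hY : Measurable Y) (hY01 : ∀ ω, Y ω = 0 ∨ Y ω = 1)
    (qs : 𝔽 → ℝ) (hqs : Measurable qs) (hqs0 : ∀ f, 0 ≤ qs f) (hqs1 : ∀ f, qs f ≤ 1)
    (hqsF : (fun ω => qs (F ω)) =ᵐ[μ] μ[Y | MeasurableSpace.comap F inferInstance])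
    (r : 𝔽 → ℝ) (hr : Measurable r) (hr0 : ∀ f, 0 ≤ r f) (hr1 : ∀ f, r f ≤ 1)
    (cSLM cLLM κ : ℝ) (hc : cSLM < cLLM) (hκ : 0 < κ)
    (hgap0 : 0 ≤ cLLM - cSLM) (hgapκ : cLLM - cSLM ≤ κ) :
    (∫ ω, routeLoss cSLM cLLM κ (if (cLLM - cSLM) / κ ≤ r (F ω) then 1 else 0) (Y ω) ∂μ) -
      (∫ ω, routeLoss cSLM cLLM κ (if (cLLM - cSLM) / κ ≤ qs (F ω) then 1 else 0) (Y ω) ∂μ) ≤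
      κ * ∫ ω, |r (F ω) - qs (F ω)| ∂μ :=
  plugin_router_regret_le_calibration_error_general μ F hF Y hY hY01 qs hqs hqsF r hr hr0 hr1 cSLM
    cLLM κ hκ
end

section
/- Let H ≥ 1 be an integer, and for each t ∈ {1, …, H} let P_t and Q_t be probability measures on a fixed measurable action space, and let ℓ_t be a real-valued functional on probability measures on that space satisfying |ℓ_t(P) − ℓ_t(Q)| ≤ L·TV(P, Q) for all probability measures P, Q and a fixed constant L > 0. Define R_P = Σ_{t=1}^H ℓ_t(P_t), R_Q = Σ_{t=1}^H ℓ_t(Q_t), and the average consistency loss C = (1/H)·Σ_{t=1}^H JSD(P_t‖Q_t). Then |R_P − R_Q| ≤ H·L·√(2·C). -/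
open MeasureTheory
open scoped ENNReal BigOperators

/-- Total variation distance between two measures:
`TV(P, Q) = sup over measurable sets A of |P(A) − Q(A)|`. -/
noncomputable def tvDist {Ω : Type*} [MeasurableSpace Ω] (P Q : Measure Ω) : ℝ :=
  ⨆ A : {A : Set Ω // MeasurableSet A}, |(P (A : Set Ω)).toReal - (Q (A : Set Ω)).toReal|

/-- Kullback–Leibler divergence `KL(P‖Q) = ∫ log (dP/dQ) dP` (via the Radon–Nikodym
derivative). -/
noncomputable def klDiv {Ω : Type*} [MeasurableSpace Ω] (P Q : Measure Ω) : ℝ :=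
  ∫ x, Real.log (P.rnDeriv Q x).toReal ∂P

/-- Jensen–Shannon divergence: with the mixture `M = (P + Q)/2`,
`JSD(P‖Q) = ½ KL(P‖M) + ½ KL(Q‖M)`. -/
noncomputable def jsDiv {Ω : Type*} [MeasurableSpace Ω] (P Q : Measure Ω) : ℝ :=
  (1 / 2) * klDiv P ((2 : ℝ≥0∞)⁻¹ • (P + Q)) + (1 / 2) * klDiv Q ((2 : ℝ≥0∞)⁻¹ • (P + Q))

/-! With `M = (P + Q) / 2` and `f = dP/dM`, the density of `Q` is `2 - f`, so
`TV(P, Q) ≤ ∫ |f - 1| dM` while `2 JSD(P‖Q) = ∫ (f log f + (2 - f) log (2 - f)) dM`. The pointwise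
inequality `(f - 1)² ≤ f log f + (2 - f) log (2 - f)` on `[0, 2]` together with Jensen's inequality
gives the Pinsker-type bound `TV² ≤ 2 JSD`. Summing the Lipschitz bounds over `t` and using
`∑ TV_t ≤ H √((1/H) ∑ TV_t²)` finishes the proof. -/

open Real ProbabilityTheory

lemma two_mul_le_log_one_add_sub_log_one_sub {t : ℝ} (h0 : 0 ≤ t) (h1 : t < 1) :
    2 * t ≤ log (1 + t) - log (1 - t) := by
  have hs := hasSum_log_sub_log_of_abs_lt_one (abs_lt.2 ⟨by linarith, h1⟩)
  simpa using le_hasSum hs 0 fun k _ => by positivity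

lemma sq_le_one_add_mul_log_add_one_sub_mul_log {t : ℝ} (ht : |t| ≤ 1) :
    t ^ 2 ≤ (1 + t) * log (1 + t) + (1 - t) * log (1 - t) := by
  wlog h0 : 0 ≤ t generalizing t
  · have := this (t := -t) (by rwa [abs_neg]) (by linarith)
    rw [neg_sq, ← sub_eq_add_neg, sub_neg_eq_add] at this
    linarith
  set F : ℝ → ℝ := fun s => (1 + s) * log (1 + s) + (1 - s) * log (1 - s) - s ^ 2
  have hF : ∀ s ∈ Set.Ioo (0 : ℝ) 1,
      HasDerivAt F (log (1 + s) - log (1 - s) - 2 * s) s := by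
    intro s ⟨hs0, hs1⟩
    have hA := (hasDerivAt_mul_log (x := 1 + s) (by linarith)).comp_const_add 1 s
    have hB := (hasDerivAt_mul_log (x := 1 - s) (by linarith)).comp_const_sub 1 s
    refine ((hA.add hB).sub (hasDerivAt_pow 2 s)).congr_deriv ?_
    push_cast
    ring
  have hmono : MonotoneOn F (Set.Icc 0 1) := by
    -- `F` is continuous up to `s = 1` because `x * log x` is continuous at `0` (`log 0 = 0`).
    refine monotoneOn_of_deriv_nonneg (convex_Icc 0 1) (by fun_prop) ?_ ?_
    · rw [interior_Icc]
      exact fun s hs => (hF s hs).differentiableAt.differentiableWithinAt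
    · rw [interior_Icc]
      intro s hs
      rw [(hF s hs).deriv]
      linarith [two_mul_le_log_one_add_sub_log_one_sub hs.1.le hs.2]
  have hF0 : F 0 = 0 := by simp [F]
  exact sub_nonneg.1 (hF0 ▸ hmono (Set.left_mem_Icc.2 zero_le_one) ⟨h0, (abs_le.1 ht).2⟩ h0)

section Integral

variable {α : Type*} [MeasurableSpace α] {μ : Measure α} {h : α → ℝ}

lemma abs_setIntegral_le_half_integral_abs (hh : Integrable h μ) (h0 : ∫ x, h x ∂μ = 0)
    {A : Set α} (hA : MeasurableSet A) : |∫ x in A, h x ∂μ| ≤ (∫ x, |h x| ∂μ) / 2 := by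
  have hsplit := integral_add_compl hA hh
  have habs := integral_add_compl hA hh.abs
  have hAc : |∫ x in Aᶜ, h x ∂μ| = |∫ x in A, h x ∂μ| := by
    rw [h0, add_eq_zero_iff_eq_neg] at hsplit
    rw [hsplit, abs_neg]
  have h1 : |∫ x in A, h x ∂μ| ≤ ∫ x in A, |h x| ∂μ := abs_integral_le_integral_abs
  have h2 : |∫ x in Aᶜ, h x ∂μ| ≤ ∫ x in Aᶜ, |h x| ∂μ := abs_integral_le_integral_abs
  linarith

lemma sq_integral_le_integral_sq [IsProbabilityMeasure μ] (hh : MemLp h 2 μ) :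
    (∫ x, h x ∂μ) ^ 2 ≤ ∫ x, h x ^ 2 ∂μ := by
  have := variance_nonneg h μ
  rw [variance_eq_sub hh] at this
  simpa using this

lemma memLp_comp_of_ae_mem_isCompact [IsFiniteMeasure μ] {K : Set ℝ} (hK : IsCompact K)
    {φ : ℝ → ℝ} (hφ : Continuous φ) (hh : AEStronglyMeasurable h μ) (hhK : ∀ᵐ x ∂μ, h x ∈ K)
    (p : ℝ≥0∞) : MemLp (fun x => φ (h x)) p μ := by
  obtain ⟨C, hC⟩ := hK.exists_bound_of_continuousOn hφ.continuousOn
  exact MemLp.of_bound (hφ.comp_aestronglyMeasurable hh) C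
    (by filter_upwards [hhK] with x hx using hC _ hx)

end Integral

section Divergences

variable {Ω : Type*} [MeasurableSpace Ω] {P Q M : Measure Ω}

lemma tvDist_nonneg (P Q : Measure Ω) : 0 ≤ tvDist P Q :=
  Real.iSup_nonneg fun _ => abs_nonneg _

lemma tvDist_le_half_integral_abs_sub_rnDeriv [IsProbabilityMeasure P] [IsProbabilityMeasure Q]
    [SigmaFinite M] (hPM : P ≪ M) (hQM : Q ≪ M) :
    tvDist P Q ≤ (∫ x, |(P.rnDeriv M x).toReal - (Q.rnDeriv M x).toReal| ∂M) / 2 := by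
  have hint : Integrable (fun x => (P.rnDeriv M x).toReal - (Q.rnDeriv M x).toReal) M :=
    Measure.integrable_toReal_rnDeriv.sub Measure.integrable_toReal_rnDeriv
  have hzero : ∫ x, ((P.rnDeriv M x).toReal - (Q.rnDeriv M x).toReal) ∂M = 0 := by
    rw [integral_sub Measure.integrable_toReal_rnDeriv Measure.integrable_toReal_rnDeriv,
      Measure.integral_toReal_rnDeriv hPM, Measure.integral_toReal_rnDeriv hQM]
    simp
  refine ciSup_le fun A => ?_
  rw [← measureReal_def, ← measureReal_def, ← Measure.setIntegral_toReal_rnDeriv hPM,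
    ← Measure.setIntegral_toReal_rnDeriv hQM,
    ← integral_sub Measure.integrable_toReal_rnDeriv.integrableOn
      Measure.integrable_toReal_rnDeriv.integrableOn]
  exact abs_setIntegral_le_half_integral_abs hint hzero A.2

lemma klDiv_eq_integral_mul_log_rnDeriv [SigmaFinite P] [P.HaveLebesgueDecomposition M]
    (hPM : P ≪ M) :
    klDiv P M = ∫ x, (P.rnDeriv M x).toReal * log (P.rnDeriv M x).toReal ∂M :=
  (integral_toReal_rnDeriv_mul hPM).symm

noncomputable def mixture (P Q : Measure Ω) : Measure Ω := (2 : ℝ≥0∞)⁻¹ • (P + Q)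

lemma jsDiv_eq (P Q : Measure Ω) :
    jsDiv P Q = (1 / 2) * klDiv P (mixture P Q) + (1 / 2) * klDiv Q (mixture P Q) := rfl

lemma two_smul_mixture (P Q : Measure Ω) : (2 : ℝ≥0∞) • mixture P Q = P + Q := by
  rw [mixture, smul_smul, ENNReal.mul_inv_cancel two_ne_zero ENNReal.ofNat_ne_top, one_smul]

instance [IsFiniteMeasure P] [IsFiniteMeasure Q] : IsFiniteMeasure (mixture P Q) :=
  ⟨ENNReal.mul_lt_top (by simp) (measure_lt_top (P + Q) _)⟩

instance [IsProbabilityMeasure P] [IsProbabilityMeasure Q] :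
    IsProbabilityMeasure (mixture P Q) := by
  constructor
  rw [mixture, Measure.smul_apply, Measure.add_apply, measure_univ, measure_univ, smul_eq_mul,
    one_add_one_eq_two, ENNReal.inv_mul_cancel two_ne_zero ENNReal.ofNat_ne_top]

lemma mixture_comm (P Q : Measure Ω) : mixture P Q = mixture Q P := by
  rw [mixture, add_comm, mixture]

lemma absolutelyContinuous_mixture_left : P ≪ mixture P Q :=
  (Measure.AbsolutelyContinuous.rfl.add_right Q).smul_right (by simp)

lemma absolutelyContinuous_mixture_right : Q ≪ mixture P Q :=
  (Measure.AbsolutelyContinuous.rfl.add_right' P).smul_right (by simp)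

lemma rnDeriv_mixture_add [IsFiniteMeasure P] [IsFiniteMeasure Q] :
    ∀ᵐ x ∂mixture P Q,
      (P.rnDeriv (mixture P Q) x).toReal + (Q.rnDeriv (mixture P Q) x).toReal = 2 := by
  set M := mixture P Q
  have hsmul : ((2 : ℝ≥0∞) • M).rnDeriv M =ᵐ[M] (2 : ℝ≥0∞) • M.rnDeriv M :=
    Measure.rnDeriv_smul_left_of_ne_top M M ENNReal.ofNat_ne_top
  rw [two_smul_mixture] at hsmul
  filter_upwards [Measure.rnDeriv_add P Q M, hsmul, Measure.rnDeriv_self M,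
    Measure.rnDeriv_lt_top P M, Measure.rnDeriv_lt_top Q M] with x hadd h2 hself hP hQ
  rw [← ENNReal.toReal_add hP.ne hQ.ne, ← Pi.add_apply, ← hadd, h2, Pi.smul_apply, hself]
  simp

lemma rnDeriv_mixture_mem_Icc [IsFiniteMeasure P] [IsFiniteMeasure Q] :
    ∀ᵐ x ∂mixture P Q, (P.rnDeriv (mixture P Q) x).toReal ∈ Set.Icc 0 2 := by
  filter_upwards [rnDeriv_mixture_add] with x hx
  exact ⟨ENNReal.toReal_nonneg, by linarith [(Q.rnDeriv (mixture P Q) x).toReal_nonneg]⟩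

lemma integrable_mul_log_rnDeriv_mixture_left [IsFiniteMeasure P] [IsFiniteMeasure Q] :
    Integrable (fun x => (P.rnDeriv (mixture P Q) x).toReal *
      log (P.rnDeriv (mixture P Q) x).toReal) (mixture P Q) :=
  memLp_one_iff_integrable.1 <| memLp_comp_of_ae_mem_isCompact isCompact_Icc continuous_mul_log
    (Measure.measurable_rnDeriv _ _).ennreal_toReal.aestronglyMeasurable rnDeriv_mixture_mem_Icc 1

lemma integrable_mul_log_rnDeriv_mixture_right [IsFiniteMeasure P] [IsFiniteMeasure Q] :
    Integrable (fun x => (Q.rnDeriv (mixture P Q) x).toReal *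
      log (Q.rnDeriv (mixture P Q) x).toReal) (mixture P Q) := by
  rw [mixture_comm]
  exact integrable_mul_log_rnDeriv_mixture_left

lemma two_mul_jsDiv_eq_integral [IsFiniteMeasure P] [IsFiniteMeasure Q] :
    2 * jsDiv P Q = ∫ x, ((P.rnDeriv (mixture P Q) x).toReal *
      log (P.rnDeriv (mixture P Q) x).toReal + (Q.rnDeriv (mixture P Q) x).toReal *
      log (Q.rnDeriv (mixture P Q) x).toReal) ∂mixture P Q := by
  rw [jsDiv_eq, klDiv_eq_integral_mul_log_rnDeriv absolutelyContinuous_mixture_left,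
    klDiv_eq_integral_mul_log_rnDeriv absolutelyContinuous_mixture_right,
    integral_add integrable_mul_log_rnDeriv_mixture_left integrable_mul_log_rnDeriv_mixture_right]
  ring

lemma tvDist_le_integral_abs_rnDeriv_mixture_sub_one [IsProbabilityMeasure P]
    [IsProbabilityMeasure Q] :
    tvDist P Q ≤ ∫ x, |(P.rnDeriv (mixture P Q) x).toReal - 1| ∂mixture P Q := by
  refine (tvDist_le_half_integral_abs_sub_rnDeriv absolutelyContinuous_mixture_left
    absolutelyContinuous_mixture_right).trans_eq ?_
  rw [div_eq_iff two_ne_zero, ← integral_mul_const]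
  refine integral_congr_ae ?_
  have key (a b : ℝ) (h : a + b = 2) : |a - b| = |a - 1| * 2 := by
    rw [show a - b = (a - 1) * 2 by linarith, abs_mul, abs_two]
  filter_upwards [rnDeriv_mixture_add] with x hx using key _ _ hx

lemma sq_tvDist_le_two_mul_jsDiv [IsProbabilityMeasure P] [IsProbabilityMeasure Q] :
    tvDist P Q ^ 2 ≤ 2 * jsDiv P Q := by
  set M := mixture P Q
  set f : Ω → ℝ := fun x => (P.rnDeriv M x).toReal
  set g : Ω → ℝ := fun x => (Q.rnDeriv M x).toReal
  have hdev : MemLp (fun x => |f x - 1|) 2 M :=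
    memLp_comp_of_ae_mem_isCompact isCompact_Icc (φ := fun y => |y - 1|) (by fun_prop)
      (Measure.measurable_rnDeriv P M).ennreal_toReal.aestronglyMeasurable
      rnDeriv_mixture_mem_Icc 2
  have hpt : ∀ᵐ x ∂M, (f x - 1) ^ 2 ≤ f x * log (f x) + g x * log (g x) := by
    filter_upwards [rnDeriv_mixture_add, rnDeriv_mixture_mem_Icc] with x hx hxI
    have := sq_le_one_add_mul_log_add_one_sub_mul_log (t := f x - 1)
      (abs_le.2 ⟨by linarith [hxI.1], by linarith [hxI.2]⟩)
    rwa [add_sub_cancel, show 1 - (f x - 1) = g x by linarith] at this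
  calc tvDist P Q ^ 2 ≤ (∫ x, |f x - 1| ∂M) ^ 2 := by
        gcongr
        exacts [tvDist_nonneg P Q, tvDist_le_integral_abs_rnDeriv_mixture_sub_one]
    _ ≤ ∫ x, (f x - 1) ^ 2 ∂M := by simpa using sq_integral_le_integral_sq hdev
    _ ≤ 2 * jsDiv P Q := by
      rw [two_mul_jsDiv_eq_integral]
      exact integral_mono_ae (by simpa using hdev.integrable_sq)
        (integrable_mul_log_rnDeriv_mixture_left.add integrable_mul_log_rnDeriv_mixture_right) hpt

end Divergences

open Finset in
lemma sum_le_card_mul_sqrt_inv_card_mul_sum_sq {ι : Type*} (s : Finset ι) (a : ι → ℝ) :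
    ∑ i ∈ s, a i ≤ #s * √((1 / #s) * ∑ i ∈ s, a i ^ 2) := by
  have hcard : (#s : ℝ) * ∑ i ∈ s, a i ^ 2 = (#s : ℝ) ^ 2 * ((1 / #s) * ∑ i ∈ s, a i ^ 2) := by
    rcases eq_or_ne (#s : ℝ) 0 with h | h
    · simp [h]
    · field_simp
  calc ∑ i ∈ s, a i ≤ √(#s * ∑ i ∈ s, a i ^ 2) := Real.le_sqrt_of_sq_le sq_sum_le_card_mul_sum_sq
    _ = #s * √((1 / #s) * ∑ i ∈ s, a i ^ 2) := by
      rw [hcard, Real.sqrt_mul (sq_nonneg _), Real.sqrt_sq (Nat.cast_nonneg _)]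

theorem sum_tv_lipschitz_consistency_bound_general
    {𝒜 : Type*} [MeasurableSpace 𝒜]
    (H : ℕ)
    (P Q : Fin H → Measure 𝒜)
    (hP : ∀ t, IsProbabilityMeasure (P t)) (hQ : ∀ t, IsProbabilityMeasure (Q t))
    (L : ℝ) (hL : 0 < L) (ℓ : Fin H → Measure 𝒜 → ℝ)
    (hℓ : ∀ t, ∀ P' Q' : Measure 𝒜, IsProbabilityMeasure P' → IsProbabilityMeasure Q' →
      |ℓ t P' - ℓ t Q'| ≤ L * tvDist P' Q') :
    |(∑ t, ℓ t (P t)) - ∑ t, ℓ t (Q t)| ≤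
      (H : ℝ) * L * Real.sqrt (2 * ((1 / (H : ℝ)) * ∑ t, jsDiv (P t) (Q t))) := by
  have hTV (t : Fin H) : tvDist (P t) (Q t) ^ 2 ≤ 2 * jsDiv (P t) (Q t) :=
    have := hP t; have := hQ t; sq_tvDist_le_two_mul_jsDiv
  have hsum : |(∑ t, ℓ t (P t)) - ∑ t, ℓ t (Q t)| ≤ L * ∑ t, tvDist (P t) (Q t) := by
    rw [← Finset.sum_sub_distrib, Finset.mul_sum]
    exact (Finset.abs_sum_le_sum_abs _ _).trans
      (Finset.sum_le_sum fun t _ => hℓ t _ _ (hP t) (hQ t))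
  have hmean : (1 / (H : ℝ)) * ∑ t, tvDist (P t) (Q t) ^ 2 ≤
      2 * ((1 / (H : ℝ)) * ∑ t, jsDiv (P t) (Q t)) := by
    rw [mul_left_comm]
    gcongr
    rw [Finset.mul_sum]
    exact Finset.sum_le_sum fun t _ => hTV t
  calc |(∑ t, ℓ t (P t)) - ∑ t, ℓ t (Q t)| ≤ L * ∑ t, tvDist (P t) (Q t) := hsum
    _ ≤ L * (H * √((1 / (H : ℝ)) * ∑ t, tvDist (P t) (Q t) ^ 2)) := by
      gcongr
      simpa only [Finset.card_univ, Fintype.card_fin] using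
        sum_le_card_mul_sqrt_inv_card_mul_sum_sq Finset.univ fun t => tvDist (P t) (Q t)
    _ ≤ L * (H * √(2 * ((1 / (H : ℝ)) * ∑ t, jsDiv (P t) (Q t)))) := by gcongr
    _ = _ := by ring

/-- Let `H ≥ 1`, and for `t ∈ {1, …, H}` let `P_t`, `Q_t` be probability
measures on a fixed measurable action space and `ℓ_t` real-valued functionals that are
`L`-Lipschitz in total variation on probability measures. With
`R_P = Σ_t ℓ_t(P_t)`, `R_Q = Σ_t ℓ_t(Q_t)`, and average consistency loss
`C = (1/H) Σ_t JSD(P_t‖Q_t)`, we have `|R_P − R_Q| ≤ H L √(2 C)`. -/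
theorem sum_tv_lipschitz_consistency_bound
    {𝒜 : Type*} [MeasurableSpace 𝒜]
    (H : ℕ) (hH : 1 ≤ H)
    (P Q : Fin H → Measure 𝒜)
    (hP : ∀ t, IsProbabilityMeasure (P t)) (hQ : ∀ t, IsProbabilityMeasure (Q t))
    (L : ℝ) (hL : 0 < L) (ℓ : Fin H → Measure 𝒜 → ℝ)
    (hℓ : ∀ t, ∀ P' Q' : Measure 𝒜, IsProbabilityMeasure P' → IsProbabilityMeasure Q' →
      |ℓ t P' - ℓ t Q'| ≤ L * tvDist P' Q') :
    |(∑ t, ℓ t (P t)) - ∑ t, ℓ t (Q t)| ≤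
      (H : ℝ) * L * Real.sqrt (2 * ((1 / (H : ℝ)) * ∑ t, jsDiv (P t) (Q t))) :=
  sum_tv_lipschitz_consistency_bound_general H P Q hP hQ L hL ℓ hℓ
end

section
/- Let (Ω, ℱ, P) be a probability space, K ≥ 1 an integer, and A_1, …, A_K independent identically distributed random variables taking values in a measurable action space 𝒜. Let G ⊆ 𝒜 be a measurable set with P(A_1 ∈ G) = μ, and let V : Ω × 𝒜 → ℝ induce measurable scores s_k = V(A_k). For each unordered pair {i, j} with i ≠ j, let M_{ij} be the event that exactly one of A_i, A_j lies in G and the score of the one outside G is at least the score of the one in G, and assume P(M_{ij}) ≤ η for a constant η ≥ 0. Let k̂ be a measurable index maximizing s_k over k ∈ {1, …, K}. Then P(A_{k̂} ∈ G) ≥ 1 − (1 − μ)^K − (K(K−1)/2)·η. -/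
open MeasureTheory ProbabilityTheory Finset

/-!
If the selected sample misses `G`, then either every sample misses `G`, an event of probability
`(1 - μG)^K` by independence, or some sample `i` hits `G` while the selected one does not; since
the selected one has maximal score, the pair `{i, k̂}` is misranked. A union bound over the
`K.choose 2` pairs finishes the proof.
-/

section

variable {Ω 𝒜 ι β : Type*}

def misrankEvent [LE β] (A : ι → Ω → 𝒜) (G : Set 𝒜) (s : ι → Ω → β) (i j : ι) : Set Ω :=
  {ω | (A i ω ∈ G ∧ A j ω ∉ G ∧ s i ω ≤ s j ω) ∨ (A j ω ∈ G ∧ A i ω ∉ G ∧ s j ω ≤ s i ω)}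

lemma misrankEvent_comm [LE β] (A : ι → Ω → 𝒜) (G : Set 𝒜) (s : ι → Ω → β) (i j : ι) :
    misrankEvent A G s i j = misrankEvent A G s j i := by
  ext ω
  exact or_comm

lemma compl_setOf_selected_mem_subset [Fintype ι] [LinearOrder ι] [LE β]
    {A : ι → Ω → 𝒜} {G : Set 𝒜} {s : ι → Ω → β} {khat : Ω → ι}
    (hmax : ∀ ω k, s k ω ≤ s (khat ω) ω) :
    {ω | A (khat ω) ω ∈ G}ᶜ ⊆
      (⋂ k, A k ⁻¹' Gᶜ) ∪ ⋃ p ∈ ({p : ι × ι | p.1 < p.2} : Finset (ι × ι)),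
        misrankEvent A G s p.1 p.2 := by
  intro ω hω
  by_cases hhit : ∃ i, A i ω ∈ G
  swap
  · exact Or.inl (Set.mem_iInter.2 fun k hk => hhit ⟨k, hk⟩)
  obtain ⟨i, hi⟩ := hhit
  have hM : ω ∈ misrankEvent A G s i (khat ω) := Or.inl ⟨hi, hω, hmax ω i⟩
  have hne : i ≠ khat ω := by rintro rfl; exact hω hi
  refine Or.inr ?_
  rcases hne.lt_or_gt with h | h
  · exact Set.mem_biUnion (x := (i, khat ω)) (by simpa using h) hM
  · rw [misrankEvent_comm] at hM
    exact Set.mem_biUnion (x := (khat ω, i)) (by simpa using h) hM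

variable [MeasurableSpace Ω] {μ : Measure Ω}

lemma one_sub_measureReal_compl_le [IsProbabilityMeasure μ] (t : Set Ω) :
    1 - μ.real tᶜ ≤ μ.real t := by
  have := measureReal_union_le (μ := μ) t tᶜ
  rw [Set.union_compl_self, probReal_univ] at this
  linarith

lemma measureReal_biUnion_misrankEvent_le [Fintype ι] [LinearOrder ι] [LE β]
    {A : ι → Ω → 𝒜} {G : Set 𝒜} {s : ι → Ω → β} {η : ℝ}
    (hmis : ∀ i j, i ≠ j → μ.real (misrankEvent A G s i j) ≤ η) :
    μ.real (⋃ p ∈ ({p : ι × ι | p.1 < p.2} : Finset (ι × ι)), misrankEvent A G s p.1 p.2) ≤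
      (Fintype.card ι).choose 2 * η := by
  grw [measureReal_biUnion_finset_le, sum_le_card_nsmul _ _ η fun p hp =>
    hmis _ _ (mem_filter.1 hp).2.ne, nsmul_eq_mul, Fintype.card_product_filter_lt]

variable [MeasurableSpace 𝒜]

lemma ProbabilityTheory.iIndepFun.measureReal_iInter_preimage [Fintype ι] {A : ι → Ω → 𝒜}
    (hindep : iIndepFun A μ) {S : ι → Set 𝒜} (hS : ∀ k, MeasurableSet (S k)) :
    μ.real (⋂ k, A k ⁻¹' S k) = ∏ k, μ.real (A k ⁻¹' S k) := by
  simp only [Measure.real, hindep.meas_iInter fun k => ⟨S k, hS k, rfl⟩, ENNReal.toReal_prod]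

lemma measureReal_iInter_preimage_compl_eq_pow [IsProbabilityMeasure μ] [Fintype ι]
    {A : ι → Ω → 𝒜} (hA : ∀ k, Measurable (A k)) (hindep : iIndepFun A μ)
    {G : Set 𝒜} (hG : MeasurableSet G) {p : ℝ} (hcov : ∀ k, μ.real (A k ⁻¹' G) = p) :
    μ.real (⋂ k, A k ⁻¹' Gᶜ) = (1 - p) ^ Fintype.card ι := by
  rw [hindep.measureReal_iInter_preimage fun _ => hG.compl]
  simp only [Set.preimage_compl, probReal_compl_eq_one_sub (hA _ hG), hcov, prod_const,
    card_univ]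

end

theorem best_of_K_verifier_selection_general
    {Ω 𝒜 : Type*} [MeasurableSpace Ω] [MeasurableSpace 𝒜]
    (μ : Measure Ω) [IsProbabilityMeasure μ]
    (K : ℕ)
    (A : Fin K → Ω → 𝒜) (hA : ∀ k, Measurable (A k))
    (hindep : iIndepFun A μ)
    (G : Set 𝒜) (hG : MeasurableSet G)
    (μG : ℝ) (hcov : ∀ k : Fin K, (μ {ω | A k ω ∈ G}).toReal = μG)
    (s : Fin K → Ω → ℝ)
    (η : ℝ)
    (hmis : ∀ i j : Fin K, i ≠ j →
      (μ {ω | (A i ω ∈ G ∧ A j ω ∉ G ∧ s i ω ≤ s j ω) ∨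
              (A j ω ∈ G ∧ A i ω ∉ G ∧ s j ω ≤ s i ω)}).toReal ≤ η)
    (khat : Ω → Fin K)
    (hmax : ∀ ω k, s k ω ≤ s (khat ω) ω) :
    1 - (1 - μG) ^ K - ((K : ℝ) * ((K : ℝ) - 1) / 2) * η ≤
      (μ {ω | A (khat ω) ω ∈ G}).toReal := by
  show _ ≤ μ.real _
  have hmiss : μ.real {ω | A (khat ω) ω ∈ G}ᶜ ≤ (1 - μG) ^ K + K.choose 2 * η := by
    grw [compl_setOf_selected_mem_subset hmax, measureReal_union_le,
      measureReal_iInter_preimage_compl_eq_pow hA hindep hG hcov,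
      measureReal_biUnion_misrankEvent_le hmis, Fintype.card_fin]
    finiteness
  rw [Nat.cast_choose_two] at hmiss
  linarith [one_sub_measureReal_compl_le (μ := μ) {ω | A (khat ω) ω ∈ G}]

/-- Let `A_1, …, A_K` be i.i.d. random variables with values in a
measurable action space `𝒜`, `G ⊆ 𝒜` a measurable set with per-sample coverage
`P(A_1 ∈ G) = μG`, and `s_k = V(A_k)` measurable verifier scores. Assume every pairwise
misranking event (exactly one of the pair lies in `G`, and the sample outside `G` scores
at least as high as the one in `G`) has probability at most `η`. If `k̂` is a measurable
index maximizing the score, then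
`P(A_{k̂} ∈ G) ≥ 1 − (1 − μG)^K − (K(K−1)/2) η`. -/
theorem best_of_K_verifier_selection
    {Ω 𝒜 : Type*} [MeasurableSpace Ω] [MeasurableSpace 𝒜]
    (μ : Measure Ω) [IsProbabilityMeasure μ]
    (K : ℕ) (hK : 1 ≤ K)
    (A : Fin K → Ω → 𝒜) (hA : ∀ k, Measurable (A k))
    (hindep : iIndepFun A μ)
    (hident : ∀ i j : Fin K, IdentDistrib (A i) (A j) μ μ)
    (G : Set 𝒜) (hG : MeasurableSet G)
    (μG : ℝ) (hcov : ∀ k : Fin K, (μ {ω | A k ω ∈ G}).toReal = μG)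
    (V : Ω × 𝒜 → ℝ) (s : Fin K → Ω → ℝ)
    (hs : ∀ k ω, s k ω = V (ω, A k ω)) (hsmeas : ∀ k, Measurable (s k))
    (η : ℝ) (hη : 0 ≤ η)
    (hmis : ∀ i j : Fin K, i ≠ j →
      (μ {ω | (A i ω ∈ G ∧ A j ω ∉ G ∧ s i ω ≤ s j ω) ∨
              (A j ω ∈ G ∧ A i ω ∉ G ∧ s j ω ≤ s i ω)}).toReal ≤ η)
    (khat : Ω → Fin K) (hkhat : Measurable khat)
    (hmax : ∀ ω k, s k ω ≤ s (khat ω) ω) :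
    1 - (1 - μG) ^ K - ((K : ℝ) * ((K : ℝ) - 1) / 2) * η ≤
      (μ {ω | A (khat ω) ω ∈ G}).toReal :=
  best_of_K_verifier_selection_general μ K A hA hindep G hG μG hcov s η hmis khat hmax
end
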